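/- Fix n ≥ 1 and suppose that for every s ≥ 1 there exists a complete s,4n-useful cycle set. Then for every k ≥ 1, every cyclic snake kC_{4n} (with any string) admits a graceful labelling in which the label 0 is assigned to a vertex of the last cycle of the snake lying at any prescribed distance d ∈ {1, 2, …, 2n} from the last cut vertex (i.e., 0 can be placed at any position of the last cycle other than the cut vertex). -/

import Mathlib

/-- The edge label induced by a vertex labelling `f`: the absolute difference of the
labels of the two endpoints. -/
def edgeLabel {V : Type*} (f : V → ℕ) : Sym2 V → ℕ :=
  Sym2.lift ⟨fun u v => Nat.dist (f u) (f v), fun u v => Nat.dist_comm (f u) (f v)⟩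

/-- `f` is a graceful labelling of the graph `G` with `m` edges: `f` is an injective
map into `{0,…,m}` and the induced edge labelling is a bijection from the edge set
onto `{1,…,m}`. -/
def IsGraceful {V : Type*} (G : SimpleGraph V) (m : ℕ) (f : V → ℕ) : Prop :=
  Function.Injective f ∧ (∀ v, f v ≤ m) ∧
    Set.InjOn (edgeLabel f) G.edgeSet ∧
    edgeLabel f '' G.edgeSet = Set.Icc 1 m

/-- `f` is a near graceful labelling of the graph `G` with `m` edges: `f` is an injective
map into `{0,…,m+1}` and the induced edge labelling is a bijection from the edge set
onto `{1,…,m-1,m}` or onto `{1,…,m-1,m+1}`. -/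
def IsNearGraceful {V : Type*} (G : SimpleGraph V) (m : ℕ) (f : V → ℕ) : Prop :=
  Function.Injective f ∧ (∀ v, f v ≤ m + 1) ∧
    Set.InjOn (edgeLabel f) G.edgeSet ∧
    (edgeLabel f '' G.edgeSet = Set.Icc 1 m ∨
      edgeLabel f '' G.edgeSet = Set.Icc 1 (m + 1) \ {m})
/-- The cycle graph of length `t`, on vertex set `ZMod t`, consecutive residues adjacent. -/
def cycleG (t : ℕ) : SimpleGraph (ZMod t) where
  Adj x y := x ≠ y ∧ (y = x + 1 ∨ x = y + 1)
  symm := ⟨fun _ _ h => ⟨h.1.symm, h.2.symm⟩⟩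
  loopless := ⟨fun _ h => h.1 rfl⟩
/-- Base adjacency for a chain of cycles: cycle `j` has length `c j`, and within each
cycle consecutive residues are adjacent. -/
def snakeBase (k : ℕ) (c : Fin k → ℕ) :
    (Σ j : Fin k, ZMod (c j)) → (Σ j : Fin k, ZMod (c j)) → Prop :=
  fun p q => ∃ (j : Fin k) (x y : ZMod (c j)),
    p = ⟨j, x⟩ ∧ q = ⟨j, y⟩ ∧ (y = x + 1 ∨ x = y + 1)

theorem snakeBase_symm {k : ℕ} {c : Fin k → ℕ} :
    ∀ {p q}, snakeBase k c p q → snakeBase k c q p := by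
  rintro p q ⟨j, x, y, rfl, rfl, h⟩
  exact ⟨j, y, x, rfl, rfl, h.symm⟩

/-- The gluing relation for a snake: for each `j` with `j + 1 < k`, the vertex of cycle `j`
at position `a j` is identified with the vertex of cycle `j+1` at position `0`. -/
def snakeGlue (k : ℕ) (c : Fin k → ℕ) (a : (j : Fin k) → ZMod (c j)) :
    (Σ j : Fin k, ZMod (c j)) → (Σ j : Fin k, ZMod (c j)) → Prop :=
  fun p q => ∃ (j : ℕ) (hj : j + 1 < k),
    p = ⟨⟨j, Nat.lt_of_succ_lt hj⟩, a ⟨j, Nat.lt_of_succ_lt hj⟩⟩ ∧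
    q = ⟨⟨j + 1, hj⟩, 0⟩

/-- The setoid on the disjoint union of the cycles generated by the gluing relation. -/
def snakeSetoid (k : ℕ) (c : Fin k → ℕ) (a : (j : Fin k) → ZMod (c j)) :
    Setoid (Σ j : Fin k, ZMod (c j)) :=
  Relation.EqvGen.setoid (snakeGlue k c a)

/-- The snake graph: `k` cycles, cycle `j` of length `c j`, where cycle `j` and cycle `j+1`
are glued by identifying the vertex of cycle `j` at position `a j` with the vertex of
cycle `j+1` at position `0`. -/
def snakeGraph (k : ℕ) (c : Fin k → ℕ) (a : (j : Fin k) → ZMod (c j)) :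
    SimpleGraph (Quotient (snakeSetoid k c a)) where
  Adj x y := x ≠ y ∧ ∃ p q, Quotient.mk (snakeSetoid k c a) p = x ∧
    Quotient.mk (snakeSetoid k c a) q = y ∧ snakeBase k c p q
  symm := by
    constructor
    rintro x y ⟨hxy, p, q, hp, hq, hb⟩
    exact ⟨hxy.symm, q, p, hq, hp, snakeBase_symm hb⟩
  loopless := ⟨fun _ h => h.1 rfl⟩

/-- `G` is a cyclic snake `kCₙ`: `G` is isomorphic to a chain of `k` cycles of length `n`,
consecutive cycles glued at a vertex, where on each internal cycle the two cut vertices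
are distinct (position `a j ≠ 0`). -/
def IsCyclicSnake {V : Type*} (G : SimpleGraph V) (k n : ℕ) : Prop :=
  ∃ a : Fin k → ZMod n,
    (∀ j : Fin k, 0 < j.val → j.val + 1 < k → a j ≠ 0) ∧
    Nonempty (G ≃g snakeGraph k (fun _ => n) a)

/-- `G` is a cyclic snake `kCₙ` whose string is `(str 1, …, str (k-2))`: the `i`-th entry
of the string is the distance between the `i`-th and `(i+1)`-th cut vertices, which in the
concrete model is the cycle distance `min (a i).val (n - (a i).val)` between positions `0`
and `a i` on cycle `i`. -/
def IsCyclicSnakeWithString {V : Type*} (G : SimpleGraph V) (k n : ℕ) (str : ℕ → ℕ) : Prop :=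
  ∃ a : Fin k → ZMod n,
    (∀ j : Fin k, 0 < j.val → j.val + 1 < k → a j ≠ 0) ∧
    (∀ j : Fin k, 0 < j.val → j.val + 1 < k →
      min (a j).val (n - (a j).val) = str j.val) ∧
    Nonempty (G ≃g snakeGraph k (fun _ => n) a)
/-- An `s,t`-useful cycle with even distance `d`: an injective labelling of the cycle of
length `t` with values in `[0, t/2 - 1] ∪ [st - t/2, st]`, whose induced edge labels are
exactly the set `[st - t + 1, st]`, and in which a vertex labelled `0` and a vertex
labelled `t/2 - 1` are at distance `d`. -/
def IsUsefulEven (s t d : ℕ) (f : ZMod t → ℕ) : Prop :=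
  Even d ∧ Function.Injective f ∧
    (∀ x, f x ∈ Set.Icc 0 (t / 2 - 1) ∪ Set.Icc (s * t - t / 2) (s * t)) ∧
    Set.InjOn (edgeLabel f) (cycleG t).edgeSet ∧
    edgeLabel f '' (cycleG t).edgeSet = Set.Icc (s * t - t + 1) (s * t) ∧
    ∃ u v, f u = 0 ∧ f v = t / 2 - 1 ∧ (cycleG t).dist u v = d

/-- An `s,t`-odd useful cycle with odd distance `d`: an injective labelling of the cycle of
length `t` with values in `[0, t/2] ∪ [st - t/2 + 1, st]`, whose induced edge labels are
exactly the set `[st - t + 1, st]`, and in which a vertex labelled `0` and a vertex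
labelled `st - t/2 + 1` are at distance `d`. -/
def IsUsefulOdd (s t d : ℕ) (f : ZMod t → ℕ) : Prop :=
  Odd d ∧ Function.Injective f ∧
    (∀ x, f x ∈ Set.Icc 0 (t / 2) ∪ Set.Icc (s * t - t / 2 + 1) (s * t)) ∧
    Set.InjOn (edgeLabel f) (cycleG t).edgeSet ∧
    edgeLabel f '' (cycleG t).edgeSet = Set.Icc (s * t - t + 1) (s * t) ∧
    ∃ u v, f u = 0 ∧ f v = s * t - t / 2 + 1 ∧ (cycleG t).dist u v = d

/-- There is a complete `s,t`-useful cycle set: for every distance `d ∈ {1, …, t/2}` there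
is an `s,t`-useful cycle (of even distance) or an `s,t`-odd useful cycle (of odd distance)
realising that distance. -/
def HasCompleteUsefulSet (s t : ℕ) : Prop :=
  ∀ d, 1 ≤ d → d ≤ t / 2 →
    (∃ f, IsUsefulEven s t d f) ∨ (∃ f, IsUsefulOdd s t d f)

section zmod
variable {t : ℕ}

lemma natCast_zmod_ne_zero (ht : 2 ≤ t) {c : ℕ} (h1 : 1 ≤ c) (h2 : c < t) : (c : ZMod t) ≠ 0 := by
  haveI : NeZero t := ⟨by omega⟩
  intro h
  rw [ZMod.natCast_eq_zero_iff] at h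
  exact absurd (Nat.le_of_dvd (by omega) h) (by omega)

lemma zmod_add_one_ne (ht : 2 ≤ t) (x : ZMod t) : x + 1 ≠ x := by
  intro h
  have h1 : ((1:ℕ) : ZMod t) = 0 := by
    have := add_left_cancel (a := x) (b := (1:ZMod t)) (c := 0) (by simpa using h)
    simpa using this
  exact natCast_zmod_ne_zero ht (by omega) (by omega) h1

lemma cycleG_adj_succ (ht : 2 ≤ t) (x : ZMod t) : (cycleG t).Adj x (x+1) :=
  ⟨(zmod_add_one_ne ht x).symm, Or.inl rfl⟩

lemma cycleG_walk (ht : 2 ≤ t) (x : ZMod t) (c : ℕ) :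
    ∃ W : (cycleG t).Walk x (x + (c:ZMod t)), W.length = c := by
  induction c with
  | zero => exact ⟨SimpleGraph.Walk.nil.copy rfl (by simp), by simp⟩
  | succ c ih =>
      obtain ⟨W, hW⟩ := ih
      have h1 : (cycleG t).Adj (x + (c:ZMod t)) (x + ((c+1:ℕ):ZMod t)) := by
        have h2 : (x + ((c+1:ℕ):ZMod t)) = (x + (c:ZMod t)) + 1 := by push_cast; ring
        rw [h2]; exact cycleG_adj_succ ht _
      exact ⟨W.concat h1, by simp [hW]⟩

lemma cycleG_dist_le (ht : 2 ≤ t) (x : ZMod t) (c : ℕ) :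
    (cycleG t).dist x (x + (c:ZMod t)) ≤ c := by
  obtain ⟨W, hW⟩ := cycleG_walk ht x c
  simpa [hW] using SimpleGraph.dist_le W

/-- walk decomposition: along any walk, endpoint difference is i - (L - i). -/
lemma cycleG_walk_sum {u v : ZMod t} (W : (cycleG t).Walk u v) :
    ∃ i ≤ W.length, v - u = (i : ZMod t) - ((W.length - i : ℕ) : ZMod t) := by
  induction W with
  | nil => exact ⟨0, by simp⟩
  | @cons u u' v h W ih =>
      obtain ⟨i, hi, hsum⟩ := ih
      rcases h.2 with h2 | h2
      · -- u' = u + 1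
        subst h2
        refine ⟨i + 1, by simp; omega, ?_⟩
        have hl : (W.cons h).length = W.length + 1 := by simp
        rw [hl]
        have h4 : (W.length + 1) - (i + 1) = W.length - i := by omega
        rw [h4]
        push_cast
        push_cast at hsum
        linear_combination hsum
      · -- u = u' + 1
        subst h2
        refine ⟨i, by simp; omega, ?_⟩
        have hl : (W.cons h).length = W.length + 1 := by simp
        rw [hl]
        have h3 : (W.length + 1) - i = (W.length - i) + 1 := by omega
        rw [h3]
        push_cast
        push_cast at hsum
        linear_combination hsum

end zmod

section place
variable {t : ℕ}

lemma zmod_val_natCast_lt (ht : 2 ≤ t) {c : ℕ} (h : c < t) : ((c : ZMod t)).val = c := by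
  haveI : NeZero t := ⟨by omega⟩
  exact ZMod.val_natCast_of_lt h

lemma cycleG_dist_cases (ht : 2 ≤ t) {u v : ZMod t} {d : ℕ}
    (h1 : 1 ≤ d) (h2 : 2 * d ≤ t) (hd : (cycleG t).dist u v = d) :
    v - u = (d : ZMod t) ∨ v - u = -(d : ZMod t) := by
  haveI : NeZero t := ⟨by omega⟩
  obtain ⟨W, hW⟩ := SimpleGraph.exists_walk_of_dist_ne_zero (by omega : (cycleG t).dist u v ≠ 0)
  rw [hd] at hW
  obtain ⟨i, hi, hsum⟩ := cycleG_walk_sum W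
  rw [hW] at hi hsum
  obtain ⟨j, hj⟩ : ∃ j, i + j = d := ⟨d - i, by omega⟩
  rw [show d - i = j from by omega] at hsum
  rcases le_or_gt i j with hc | hc
  · obtain ⟨e, hej⟩ : ∃ e, i + e = j := ⟨j - i, by omega⟩
    have h3 : v - u = -(e : ZMod t) := by
      rw [hsum, ← hej]; push_cast; ring
    have hu : u = v + (e : ZMod t) := by linear_combination -h3
    have h4 := cycleG_dist_le ht v e
    rw [← hu, SimpleGraph.dist_comm, hd] at h4
    have hed : e = d := by omega
    rw [hed] at h3
    exact Or.inr h3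
  · obtain ⟨e, hej⟩ : ∃ e, j + e = i := ⟨i - j, by omega⟩
    have h3 : v - u = (e : ZMod t) := by
      rw [hsum, ← hej]; push_cast; ring
    have hv : v = u + (e : ZMod t) := by linear_combination h3
    have h4 := cycleG_dist_le ht u e
    rw [← hv, hd] at h4
    have hed : e = d := by omega
    rw [hed] at h3
    exact Or.inl h3

end place

section edges
variable {t : ℕ}

lemma edgeLabel_mk (f : ZMod t → ℕ) (x y : ZMod t) :
    edgeLabel f s(x, y) = Nat.dist (f x) (f y) := rfl

lemma cycleG_edge_mem (ht : 3 ≤ t) (x : ZMod t) : s(x, x+1) ∈ (cycleG t).edgeSet :=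
  (cycleG t).mem_edgeSet.mpr (cycleG_adj_succ (by omega) x)

lemma cycleG_edge_form (ht : 3 ≤ t) {e : Sym2 (ZMod t)} (he : e ∈ (cycleG t).edgeSet) :
    ∃ x, e = s(x, x+1) := by
  induction e with
  | _ a b =>
    rw [SimpleGraph.mem_edgeSet] at he
    rcases he.2 with h | h
    · exact ⟨a, by rw [h]⟩
    · exact ⟨b, by rw [h, Sym2.eq_swap]⟩

lemma cycleG_edge_eq_iff (ht : 3 ≤ t) {x y : ZMod t} (h : s(x, x+1) = s(y, y+1)) : x = y := by
  rw [Sym2.eq_iff] at h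
  rcases h with ⟨h1, _⟩ | ⟨h1, h2⟩
  · exact h1
  · exfalso
    have h4 : ((2:ℕ) : ZMod t) = 0 := by
      push_cast
      linear_combination h2 - h1
    exact natCast_zmod_ne_zero (by omega) (by omega) (by omega) h4

lemma indexed_of_setfacts (ht : 3 ≤ t) (g : ZMod t → ℕ) (L U : ℕ)
    (hinj : Set.InjOn (edgeLabel g) (cycleG t).edgeSet)
    (himg : edgeLabel g '' (cycleG t).edgeSet = Set.Icc L U) :
    (∀ x y, Nat.dist (g x) (g (x+1)) = Nat.dist (g y) (g (y+1)) → x = y) ∧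
    (∀ x, L ≤ Nat.dist (g x) (g (x+1)) ∧ Nat.dist (g x) (g (x+1)) ≤ U) ∧
    (∀ m, L ≤ m → m ≤ U → ∃ x, Nat.dist (g x) (g (x+1)) = m) := by
  refine ⟨?_, ?_, ?_⟩
  · intro x y h
    exact cycleG_edge_eq_iff ht
      (hinj (cycleG_edge_mem ht x) (cycleG_edge_mem ht y) (by rw [edgeLabel_mk, edgeLabel_mk, h]))
  · intro x
    have : edgeLabel g s(x, x+1) ∈ Set.Icc L U := by
      rw [← himg]; exact ⟨_, cycleG_edge_mem ht x, rfl⟩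
    exact this
  · intro m h1 h2
    have : m ∈ edgeLabel g '' (cycleG t).edgeSet := by rw [himg]; exact ⟨h1, h2⟩
    obtain ⟨e, he, hle⟩ := this
    obtain ⟨x, rfl⟩ := cycleG_edge_form ht he
    exact ⟨x, hle⟩

end edges

section pack
variable {t : ℕ}

/-- indexed edge facts -/
def EFacts {t : ℕ} (L U : ℕ) (φ : ZMod t → ℕ) : Prop :=
  (∀ x y, Nat.dist (φ x) (φ (x+1)) = Nat.dist (φ y) (φ (y+1)) → x = y) ∧
  (∀ x, L ≤ Nat.dist (φ x) (φ (x+1)) ∧ Nat.dist (φ x) (φ (x+1)) ≤ U) ∧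
  (∀ m, L ≤ m → m ≤ U → ∃ x, Nat.dist (φ x) (φ (x+1)) = m)

lemma efacts_shift {L U : ℕ} {g : ZMod t → ℕ} (h : EFacts L U g) (b : ZMod t) :
    EFacts L U (fun x => g (x + b)) := by
  obtain ⟨h1, h2, h3⟩ := h
  have key : ∀ x : ZMod t, g (x + 1 + b) = g ((x + b) + 1) := by
    intro x; congr 1; ring
  refine ⟨?_, ?_, ?_⟩
  · intro x y hxy
    simp only [key] at hxy
    have := h1 _ _ hxy
    exact add_right_cancel this
  · intro x; simp only [key]; exact h2 (x + b)
  · intro m hm1 hm2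
    obtain ⟨x, hx⟩ := h3 m hm1 hm2
    exact ⟨x - b, by simp only [key, sub_add_cancel]; exact hx⟩

lemma efacts_reflect {L U : ℕ} {g : ZMod t → ℕ} (h : EFacts L U g) (b : ZMod t) :
    EFacts L U (fun x => g (b - x)) := by
  obtain ⟨h1, h2, h3⟩ := h
  have key : ∀ x : ZMod t, Nat.dist (g (b - x)) (g (b - (x + 1))) =
      Nat.dist (g (b - x - 1)) (g ((b - x - 1) + 1)) := by
    intro x
    rw [Nat.dist_comm]
    congr 2
    · ring
    · ring
  refine ⟨?_, ?_, ?_⟩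
  · intro x y hxy
    simp only [key] at hxy
    have h4 := h1 _ _ hxy
    have : b - x = b - y := by linear_combination h4
    exact sub_right_inj.mp this
  · intro x; simp only [key]; exact h2 _
  · intro m hm1 hm2
    obtain ⟨x, hx⟩ := h3 m hm1 hm2
    refine ⟨b - x - 1, ?_⟩
    simp only [key]
    have : b - (b - x - 1) - 1 = x := by ring
    rw [this]
    exact hx

/-- a placed cycle labelling -/
def Pack (s t lo A : ℕ) (p : ZMod t) (φ : ZMod t → ℕ) : Prop :=
  Function.Injective φ ∧
  (∀ x, φ x ≤ lo ∨ (s * t - (t - 1 - lo) ≤ φ x ∧ φ x ≤ s * t)) ∧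
  EFacts (s * t - t + 1) (s * t) φ ∧
  φ 0 = A ∧ φ p = 0

lemma zmod_cast_val_eq (ht : 1 ≤ t) (p : ZMod t) : ((p.val : ℕ) : ZMod t) = p := by
  haveI : NeZero t := ⟨by omega⟩
  simp [ZMod.natCast_val, ZMod.cast_id]

lemma place_pack (ht : 3 ≤ t) {f : ZMod t → ℕ} (hinj : Function.Injective f)
    {L U : ℕ} (hef : EFacts L U f) {u v : ZMod t} {d : ℕ} (h1 : 1 ≤ d) (h2 : 2*d ≤ t)
    (hdist : (cycleG t).dist u v = d) {p : ZMod t} (hp : min p.val (t - p.val) = d) :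
    ∃ φ : ZMod t → ℕ, Function.Injective φ ∧ EFacts L U φ ∧ (∀ x, ∃ y, φ x = f y) ∧
      φ 0 = f v ∧ φ p = f u := by
  haveI : NeZero t := ⟨by omega⟩
  have hw := cycleG_dist_cases (by omega) h1 h2 hdist
  have hplt : p.val < t := ZMod.val_lt p
  have hpv : p = (d : ZMod t) ∨ p = -(d : ZMod t) := by
    rcases le_or_gt p.val (t - p.val) with hc | hc
    · left
      have : d = p.val := by omega
      rw [this, zmod_cast_val_eq (by omega)]
    · right
      have hdv : d = t - p.val := by omega
      have hz : ((t - p.val : ℕ) : ZMod t) + ((p.val : ℕ) : ZMod t) = 0 := by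
        rw [← Nat.cast_add, show (t - p.val) + p.val = t by omega]
        exact ZMod.natCast_self t
      have hcv : ((p.val : ℕ) : ZMod t) = p := zmod_cast_val_eq (by omega) p
      rw [hdv]
      linear_combination hz - hcv
  have hcase : u - v = p ∨ v - p = u := by
    rcases hw with hw | hw <;> rcases hpv with hpv | hpv
    · right; linear_combination hw - hpv
    · left; linear_combination -hw - hpv
    · left; linear_combination -hw - hpv
    · right; linear_combination hw - hpv
  rcases hcase with hc | hc
  · refine ⟨fun x => f (x + v), hinj.comp fun x y hxy => by linear_combination hxy,
      efacts_shift hef v, fun x => ⟨x + v, rfl⟩, by simp, ?_⟩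
    have hpu : p + v = u := by linear_combination -hc
    show f (p + v) = f u
    rw [hpu]
  · refine ⟨fun x => f (v - x), hinj.comp fun x y hxy => by linear_combination -hxy,
      efacts_reflect hef v, fun x => ⟨v - x, rfl⟩, by simp, ?_⟩
    show f (v - p) = f u
    rw [hc]

lemma exists_pack {n s : ℕ} (hn : 1 ≤ n) (hs : 1 ≤ s) (H : HasCompleteUsefulSet s (4*n))
    (p : ZMod (4*n)) (hp : p ≠ 0) :
    ∃ lo A φ, ((lo = 2*n - 1 ∧ A = 2*n - 1) ∨ (lo = 2*n ∧ A = s*(4*n) - 2*n + 1)) ∧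
      Pack s (4*n) lo A p φ := by
  have ht : 3 ≤ 4*n := by omega
  haveI : NeZero (4*n) := ⟨by omega⟩
  have hST4 : 4*n ≤ s*(4*n) := Nat.le_mul_of_pos_left _ (by omega)
  set d := min p.val (4*n - p.val) with hd
  have hplt : p.val < 4*n := ZMod.val_lt p
  have hpv0 : p.val ≠ 0 := by rw [Ne, ZMod.val_eq_zero]; exact hp
  have hd1 : 1 ≤ d := by omega
  have h2d : 2*d ≤ 4*n := by omega
  have hdt2 : d ≤ (4*n)/2 := by omega
  rcases H d hd1 hdt2 with ⟨f, hf⟩ | ⟨f, hf⟩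
  · obtain ⟨hev, hinjf, hvals, hinjE, himg, u, v, hu, hv, hdist⟩ := hf
    obtain ⟨e1, e2, e3⟩ := indexed_of_setfacts ht f _ _ hinjE himg
    obtain ⟨φ, hφinj, hφef, hφvals, hφ0, hφp⟩ :=
      place_pack ht hinjf ⟨e1, e2, e3⟩ hd1 h2d hdist hd.symm
    refine ⟨2*n - 1, 2*n - 1, φ, Or.inl ⟨rfl, rfl⟩, hφinj, ?_, hφef, ?_, ?_⟩
    · intro x
      obtain ⟨y, hy⟩ := hφvals x
      rw [hy]
      have hv2 := hvals y
      simp only [Set.mem_union, Set.mem_Icc] at hv2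
      have h42 : (4*n)/2 = 2*n := by omega
      rw [h42] at hv2
      rcases hv2 with h | h
      · left; omega
      · right; omega
    · rw [hφ0, hv]; omega
    · rw [hφp, hu]
  · obtain ⟨hodd, hinjf, hvals, hinjE, himg, u, v, hu, hv, hdist⟩ := hf
    obtain ⟨e1, e2, e3⟩ := indexed_of_setfacts ht f _ _ hinjE himg
    obtain ⟨φ, hφinj, hφef, hφvals, hφ0, hφp⟩ :=
      place_pack ht hinjf ⟨e1, e2, e3⟩ hd1 h2d hdist hd.symm
    refine ⟨2*n, s*(4*n) - 2*n + 1, φ, Or.inr ⟨rfl, rfl⟩, hφinj, ?_, hφef, ?_, ?_⟩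
    · intro x
      obtain ⟨y, hy⟩ := hφvals x
      rw [hy]
      have hv2 := hvals y
      simp only [Set.mem_union, Set.mem_Icc] at hv2
      have h42 : (4*n)/2 = 2*n := by omega
      rw [h42] at hv2
      rcases hv2 with h | h
      · left; omega
      · right; omega
    · rw [hφ0, hv]
      have h42 : (4*n)/2 = 2*n := by omega
      rw [h42]
    · rw [hφp, hu]

lemma exists_base {n : ℕ} (hn : 1 ≤ n) (H : HasCompleteUsefulSet 1 (4*n)) (p : ZMod (4*n)) :
    ∃ φ : ZMod (4*n) → ℕ, Function.Injective φ ∧ (∀ x, φ x ≤ 4*n) ∧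
      EFacts 1 (4*n) φ ∧ φ p = 0 := by
  have ht : 3 ≤ 4*n := by omega
  haveI : NeZero (4*n) := ⟨by omega⟩
  have hL : 1*(4*n) - 4*n + 1 = 1 := by omega
  have hU : 1*(4*n) = 4*n := by omega
  have key : ∀ f : ZMod (4*n) → ℕ, Function.Injective f → (∀ x, f x ≤ 4*n) →
      Set.InjOn (edgeLabel f) (cycleG (4*n)).edgeSet →
      edgeLabel f '' (cycleG (4*n)).edgeSet = Set.Icc (1*(4*n) - 4*n + 1) (1*(4*n)) →
      ∀ u : ZMod (4*n), f u = 0 →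
      ∃ φ : ZMod (4*n) → ℕ, Function.Injective φ ∧ (∀ x, φ x ≤ 4*n) ∧
        EFacts 1 (4*n) φ ∧ φ p = 0 := by
    intro f hinjf hbd hinjE himg u hu
    obtain ⟨e1, e2, e3⟩ := indexed_of_setfacts ht f _ _ hinjE himg
    rw [hL, hU] at e2 e3
    refine ⟨fun x => f (x + (u - p)), hinjf.comp fun x y hxy => by linear_combination hxy,
      fun x => hbd _, efacts_shift ⟨e1, e2, e3⟩ (u - p), ?_⟩
    show f (p + (u - p)) = 0
    have hpu : p + (u - p) = u := by ring
    rw [hpu, hu]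
  rcases H 1 le_rfl (by omega) with ⟨f, hf⟩ | ⟨f, hf⟩
  · obtain ⟨_, hinjf, hvals, hinjE, himg, u, v, hu, hv, hdist⟩ := hf
    refine key f hinjf ?_ hinjE himg u hu
    intro x
    have := hvals x
    simp only [Set.mem_union, Set.mem_Icc] at this
    omega
  · obtain ⟨_, hinjf, hvals, hinjE, himg, u, v, hu, hv, hdist⟩ := hf
    refine key f hinjf ?_ hinjE himg u hu
    intro x
    have := hvals x
    simp only [Set.mem_union, Set.mem_Icc] at this
    omega
end pack

section main
variable {n : ℕ}

/-- The package of properties of a partial snake labelling. -/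
def SnakeLab (n k : ℕ) (A : ℕ → ZMod (4*n)) (p : ZMod (4*n)) (G : ℕ → ZMod (4*n) → ℕ) : Prop :=
  (∀ j x j' y, j < k → j' < k → G j x = G j' y →
    (j = j' ∧ x = y) ∨ (j' = j + 1 ∧ x = A j ∧ y = 0) ∨ (j = j' + 1 ∧ y = A j' ∧ x = 0)) ∧
  (∀ j, j + 1 < k → G j (A j) = G (j+1) 0) ∧
  (∀ j x, j < k → G j x ≤ k * (4*n)) ∧
  (∀ j x j' y, j < k → j' < k →
    Nat.dist (G j x) (G j (x+1)) = Nat.dist (G j' y) (G j' (y+1)) → j = j' ∧ x = y) ∧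
  (∀ j x, j < k → 1 ≤ Nat.dist (G j x) (G j (x+1)) ∧ Nat.dist (G j x) (G j (x+1)) ≤ k*(4*n)) ∧
  (∀ m, 1 ≤ m → m ≤ k * (4*n) → ∃ j x, j < k ∧ Nat.dist (G j x) (G j (x+1)) = m) ∧
  G (k-1) p = 0

lemma step_lemma {k : ℕ} (hn : 1 ≤ n) (hk : 1 ≤ k)
    (A : ℕ → ZMod (4*n)) (hA : ∀ j, 0 < j → j + 1 < k + 1 → A j ≠ 0)
    (p : ZMod (4*n)) (hp : p ≠ 0)
    (G : ℕ → ZMod (4*n) → ℕ) (hG : SnakeLab n k A (A (k-1)) G)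
    (φ : ZMod (4*n) → ℕ) (φinj : Function.Injective φ)
    (φef : EFacts ((k+1)*(4*n) - 4*n + 1) ((k+1)*(4*n)) φ)
    (φbd : ∀ y, φ y ≤ (k+1)*(4*n))
    (φp : φ p = 0)
    (θ : ℕ → ℕ)
    (θdist : ∀ z w, z ≤ k*(4*n) → w ≤ k*(4*n) → Nat.dist (θ z) (θ w) = Nat.dist z w)
    (θbd : ∀ z, z ≤ k*(4*n) → θ z ≤ (k+1)*(4*n))
    (θ0 : θ 0 = φ 0)
    (sep : ∀ z y, z ≤ k*(4*n) → φ y = θ z → (z = 0 ∧ φ y = φ 0)) :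
    ∃ G', SnakeLab n (k+1) A p G' := by
  obtain ⟨ginj, gglue, gbd, geinj, gebd, gesurj, gzero⟩ := hG
  have hM : (k+1)*(4*n) = k*(4*n) + 4*n := by ring
  have θinj : ∀ z w, z ≤ k*(4*n) → w ≤ k*(4*n) → θ z = θ w → z = w := by
    intro z w hz hw hzw
    have h1 : Nat.dist (θ z) (θ w) = 0 := by rw [hzw]; simp [Nat.dist]
    rw [θdist z w hz hw] at h1
    have := Nat.eq_of_dist_eq_zero h1
    exact this
  refine ⟨fun j x => if j < k then θ (G j x) else φ x, ?_, ?_, ?_, ?_, ?_, ?_, ?_⟩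
  · -- injectivity mod glue
    intro j x j' y hj hj' hxy
    by_cases h1 : j < k <;> by_cases h2 : j' < k <;>
      simp only [h1, h2, if_true, if_false] at hxy
    · exact ginj j x j' y h1 h2 (θinj _ _ (gbd j x h1) (gbd j' y h2) hxy)
    · -- j < k, j' = k
      obtain ⟨hz, hA0⟩ := sep (G j x) y (gbd j x h1) hxy.symm
      have hy0 : y = 0 := φinj hA0
      have hGx : G j x = G (k-1) (A (k-1)) := by rw [hz, gzero]
      rcases ginj j x (k-1) (A (k-1)) h1 (by omega) hGx with
        ⟨hjj, hxx⟩ | ⟨hjj, hxx, hzz⟩ | ⟨hjj, hyy, hxx⟩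
      · right; left
        refine ⟨by omega, ?_, hy0⟩
        rw [hjj]
        exact hxx
      · exact absurd hzz (hA (k-1) (by omega) (by omega))
      · omega
    · -- j = k, j' < k
      obtain ⟨hz, hA0⟩ := sep (G j' y) x (gbd j' y h2) hxy
      have hx0 : x = 0 := φinj hA0
      have hGy : G j' y = G (k-1) (A (k-1)) := by rw [hz, gzero]
      rcases ginj j' y (k-1) (A (k-1)) h2 (by omega) hGy with
        ⟨hjj, hyy⟩ | ⟨hjj, hyy, hzz⟩ | ⟨hjj, hyy2, hyy⟩
      · right; right
        refine ⟨by omega, ?_, hx0⟩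
        rw [hjj]
        exact hyy
      · exact absurd hzz (hA (k-1) (by omega) (by omega))
      · omega
    · -- both = k
      left
      exact ⟨by omega, φinj hxy⟩
  · -- glue
    intro j hjk
    by_cases h1 : j + 1 < k
    · simp only [show j < k by omega, h1, if_true]
      rw [gglue j h1]
    · have hjk1 : j = k - 1 := by omega
      have h2 : ¬ (j + 1 < k) := h1
      simp only [show j < k by omega, show ¬ (j + 1 < k) by omega, if_true, if_false]
      rw [hjk1, gzero, θ0]
  · -- bound
    intro j x hj
    by_cases h1 : j < k <;> simp only [h1, if_true, if_false]
    · exact θbd _ (gbd j x h1)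
    · exact φbd x
  · -- edge injectivity
    intro j x j' y hj hj' hxy
    by_cases h1 : j < k <;> by_cases h2 : j' < k <;>
      simp only [h1, h2, if_true, if_false] at hxy
    · rw [θdist _ _ (gbd j x h1) (gbd j (x+1) h1),
        θdist _ _ (gbd j' y h2) (gbd j' (y+1) h2)] at hxy
      exact geinj j x j' y h1 h2 hxy
    · exfalso
      rw [θdist _ _ (gbd j x h1) (gbd j (x+1) h1)] at hxy
      have hb1 := (gebd j x h1).2
      have hb2 := (φef.2.1 y).1
      omega
    · exfalso
      rw [θdist _ _ (gbd j' y h2) (gbd j' (y+1) h2)] at hxy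
      have hb1 := (gebd j' y h2).2
      have hb2 := (φef.2.1 x).1
      omega
    · exact ⟨by omega, φef.1 x y hxy⟩
  · -- edge bounds
    intro j x hj
    by_cases h1 : j < k <;> simp only [h1, if_true, if_false]
    · rw [θdist _ _ (gbd j x h1) (gbd j (x+1) h1)]
      have := gebd j x h1
      omega
    · have := φef.2.1 x
      omega
  · -- edge surjectivity
    intro m hm1 hm2
    by_cases h1 : m ≤ k*(4*n)
    · obtain ⟨j, x, hjk, hx⟩ := gesurj m hm1 h1
      refine ⟨j, x, by omega, ?_⟩
      simp only [hjk, if_true]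
      rw [θdist _ _ (gbd j x hjk) (gbd j (x+1) hjk)]
      exact hx
    · obtain ⟨x, hx⟩ := φef.2.2 m (by omega) hm2
      refine ⟨k, x, by omega, ?_⟩
      simp only [lt_irrefl, if_false]
      exact hx
  · -- zero
    simp only [Nat.add_sub_cancel, lt_irrefl, if_false]
    exact φp

lemma nat_dist_shift (c z w : ℕ) : Nat.dist (z + c) (w + c) = Nat.dist z w := by
  simp [Nat.dist]; omega

lemma nat_dist_compl {C z w : ℕ} (hz : z ≤ C) (hw : w ≤ C) :
    Nat.dist (C - z) (C - w) = Nat.dist z w := by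
  simp [Nat.dist]; omega

lemma snake_core (hn : 1 ≤ n) (H : ∀ s, 1 ≤ s → HasCompleteUsefulSet s (4*n)) :
    ∀ k, 1 ≤ k → ∀ A : ℕ → ZMod (4*n),
      (∀ j, 0 < j → j + 1 < k → A j ≠ 0) →
      ∀ p : ZMod (4*n), (k = 1 ∨ p ≠ 0) →
      ∃ G, SnakeLab n k A p G := by
  intro k hk
  induction k, hk using Nat.le_induction with
  | base =>
      intro A hA p _
      obtain ⟨φ, φinj, φbd, ⟨e1, e2, e3⟩, φp⟩ := exists_base hn (H 1 le_rfl) p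
      refine ⟨fun _ x => φ x, ?_, ?_, ?_, ?_, ?_, ?_, ?_⟩
      · intro j x j' y hj hj' hxy
        exact Or.inl ⟨by omega, φinj hxy⟩
      · intro j hj; omega
      · intro j x _
        show φ x ≤ 1 * (4*n)
        have := φbd x; omega
      · intro j x j' y hj hj' hxy
        exact ⟨by omega, e1 x y hxy⟩
      · intro j x _
        show 1 ≤ Nat.dist (φ x) (φ (x+1)) ∧ Nat.dist (φ x) (φ (x+1)) ≤ 1*(4*n)
        have := e2 x; omega
      · intro m hm1 hm2
        obtain ⟨x, hx⟩ := e3 m hm1 (by omega)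
        exact ⟨0, x, by omega, hx⟩
      · exact φp
  | succ k hk ih =>
      intro A hA p hp
      replace hp : p ≠ 0 := by
        rcases hp with h | h
        · exact absurd h (by omega)
        · exact h
      have hA' : ∀ j, 0 < j → j + 1 < k → A j ≠ 0 := fun j h1 h2 => hA j h1 (by omega)
      have hpold : k = 1 ∨ A (k-1) ≠ 0 := by
        by_cases hk1 : k = 1
        · exact Or.inl hk1
        · exact Or.inr (hA (k-1) (by omega) (by omega))
      obtain ⟨G, hG⟩ := ih A hA' (A (k-1)) hpold
      obtain ⟨lo, A0, φ, hcase, φinj, φvals, φef, φ0, φp⟩ :=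
        exists_pack hn (by omega : 1 ≤ k+1) (H (k+1) (by omega)) p hp
      have hM : (k+1)*(4*n) = k*(4*n) + 4*n := by ring
      have φbd : ∀ y, φ y ≤ (k+1)*(4*n) := by
        intro y
        rcases hcase with ⟨hlo, _⟩ | ⟨hlo, _⟩ <;> rcases φvals y with h | h <;> omega
      rcases hcase with ⟨hlo, hA0⟩ | ⟨hlo, hA0⟩
      · -- even type : shift upwards by 2n-1
        refine step_lemma hn hk A hA p hp G hG φ φinj φef φbd φp
          (fun z => z + (2*n - 1)) (fun z w _ _ => nat_dist_shift _ z w) ?_ ?_ ?_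
        · intro z hz
          show z + (2*n - 1) ≤ (k+1)*(4*n)
          omega
        · show 0 + (2*n - 1) = φ 0
          rw [φ0, hA0]; omega
        · intro z y hz hy
          replace hy : φ y = z + (2*n - 1) := hy
          rcases φvals y with h | h
          · rw [hlo] at h
            have hz0 : z = 0 := by omega
            refine ⟨hz0, ?_⟩
            rw [φ0, hA0]
            omega
          · rw [hlo] at h
            omega
      · -- odd type : complement
        refine step_lemma hn hk A hA p hp G hG φ φinj φef φbd φp
          (fun z => ((k+1)*(4*n) - 2*n + 1) - z) ?_ ?_ ?_ ?_
        · intro z w hz hw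
          show Nat.dist ((k+1)*(4*n) - 2*n + 1 - z) ((k+1)*(4*n) - 2*n + 1 - w) = Nat.dist z w
          exact nat_dist_compl (by omega) (by omega)
        · intro z hz
          show (k+1)*(4*n) - 2*n + 1 - z ≤ (k+1)*(4*n)
          omega
        · show (k+1)*(4*n) - 2*n + 1 - 0 = φ 0
          rw [φ0, hA0]; omega
        · intro z y hz hy
          replace hy : φ y = (k+1)*(4*n) - 2*n + 1 - z := hy
          rcases φvals y with h | h
          · rw [hlo] at h
            omega
          · rw [hlo] at h
            have hz0 : z = 0 := by omega
            refine ⟨hz0, ?_⟩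
            rw [φ0, hA0]
            omega
end main

section assemble
variable {n k : ℕ}

lemma sig_eq_iff {j j' : Fin k} {x y : ZMod (4*n)} :
    (⟨j, x⟩ : Σ _i : Fin k, ZMod (4*n)) = ⟨j', y⟩ ↔ (j = j' ∧ x = y) := by
  constructor
  · intro h
    injection h with h1 h2
    exact ⟨h1, h2⟩
  · rintro ⟨rfl, rfl⟩; rfl

/-- the explicit description of the snake equivalence relation -/
def SnakeR (a : Fin k → ZMod (4*n)) (p q : Σ _j : Fin k, ZMod (4*n)) : Prop :=
  p = q ∨ snakeGlue k (fun _ => 4*n) a p q ∨ snakeGlue k (fun _ => 4*n) a q p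

lemma snakeR_equiv (hn : 1 ≤ n) (a : Fin k → ZMod (4*n))
    (ha : ∀ j : Fin k, 0 < j.val → j.val + 1 < k → a j ≠ 0) :
    Equivalence (SnakeR a) := by
  constructor
  · intro p; exact Or.inl rfl
  · intro p q h
    rcases h with h | h | h
    · exact Or.inl h.symm
    · exact Or.inr (Or.inr h)
    · exact Or.inr (Or.inl h)
  · intro p q r hpq hqr
    have nochain : ∀ p' q' r', snakeGlue k (fun _ => 4*n) a p' q' →
        snakeGlue k (fun _ => 4*n) a q' r' → False := by
      rintro p' q' r' ⟨j, hj, rfl, rfl⟩ ⟨j', hj', hq, _⟩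
      rw [sig_eq_iff, Fin.mk.injEq] at hq
      obtain ⟨hjj, hval⟩ := hq
      have h0 : a ⟨j', Nat.lt_of_succ_lt hj'⟩ = 0 := hval.symm
      exact ha ⟨j', Nat.lt_of_succ_lt hj'⟩ (by simp; omega) (by simp; omega) h0
    rcases hpq with h | h | h
    · subst h; exact hqr
    · rcases hqr with h2 | h2 | h2
      · subst h2; exact Or.inr (Or.inl h)
      · exact (nochain _ _ _ h h2).elim
      · -- glue p q and glue r q : p = r
        obtain ⟨j, hj, hp, hq⟩ := h
        obtain ⟨j', hj', hr, hq'⟩ := h2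
        rw [hq'] at hq
        rw [sig_eq_iff, Fin.mk.injEq] at hq
        have : j = j' := by omega
        subst this
        rw [hp, hr]
        exact Or.inl rfl
    · rcases hqr with h2 | h2 | h2
      · subst h2; exact Or.inr (Or.inr h)
      · -- glue q p and glue q r : p = r
        obtain ⟨j, hj, hq, hp⟩ := h
        obtain ⟨j', hj', hq', hr⟩ := h2
        rw [hq'] at hq
        rw [sig_eq_iff, Fin.mk.injEq] at hq
        have : j = j' := by omega
        subst this
        rw [hp, hr]
        exact Or.inl rfl
      · exact (nochain _ _ _ h2 h).elim

lemma snake_mk_eq_iff (hn : 1 ≤ n) (a : Fin k → ZMod (4*n))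
    (ha : ∀ j : Fin k, 0 < j.val → j.val + 1 < k → a j ≠ 0)
    (p q : Σ _j : Fin k, ZMod (4*n)) :
    Quotient.mk (snakeSetoid k (fun _ => 4*n) a) p =
      Quotient.mk (snakeSetoid k (fun _ => 4*n) a) q ↔ SnakeR a p q := by
  rw [Quotient.eq]
  show Relation.EqvGen (snakeGlue k (fun _ => 4*n) a) p q ↔ SnakeR a p q
  rw [(snakeR_equiv hn a ha).eqvGen_iff.symm]
  constructor
  · intro h
    induction h with
    | rel x y h => exact Relation.EqvGen.rel _ _ (Or.inr (Or.inl h))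
    | refl x => exact Relation.EqvGen.refl x
    | symm x y _ ih => exact Relation.EqvGen.symm _ _ ih
    | trans x y z _ _ ih1 ih2 => exact Relation.EqvGen.trans _ _ _ ih1 ih2
  · intro h
    induction h with
    | rel x y h =>
        rcases h with h | h | h
        · subst h; exact Relation.EqvGen.refl x
        · exact Relation.EqvGen.rel _ _ h
        · exact Relation.EqvGen.symm _ _ (Relation.EqvGen.rel _ _ h)
    | refl x => exact Relation.EqvGen.refl x
    | symm x y _ ih => exact Relation.EqvGen.symm _ _ ih
    | trans x y z _ _ ih1 ih2 => exact Relation.EqvGen.trans _ _ _ ih1 ih2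

end assemble

section final
variable {n k : ℕ}

lemma snake_adj_form {a : Fin k → ZMod (4*n)} {X Y : Quotient (snakeSetoid k (fun _ => 4*n) a)}
    (h : (snakeGraph k (fun _ => 4*n) a).Adj X Y) :
    ∃ (j : Fin k) (x : ZMod (4*n)),
      (X = Quotient.mk _ ⟨j, x⟩ ∧ Y = Quotient.mk _ ⟨j, x+1⟩) ∨
      (X = Quotient.mk _ ⟨j, x+1⟩ ∧ Y = Quotient.mk _ ⟨j, x⟩) := by
  obtain ⟨hne, p, q, hp, hq, j, x0, y0, rfl, rfl, hbase⟩ := h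
  rcases hbase with h1 | h1
  · exact ⟨j, x0, Or.inl ⟨hp.symm, by rw [← hq, h1]⟩⟩
  · exact ⟨j, y0, Or.inr ⟨by rw [← hp, h1], hq.symm⟩⟩

lemma snake_adj_of (hn : 1 ≤ n) {a : Fin k → ZMod (4*n)}
    (ha : ∀ j : Fin k, 0 < j.val → j.val + 1 < k → a j ≠ 0) (j : Fin k) (x : ZMod (4*n)) :
    (snakeGraph k (fun _ => 4*n) a).Adj
      (Quotient.mk (snakeSetoid k (fun _ => 4*n) a) ⟨j, x⟩)
      (Quotient.mk (snakeSetoid k (fun _ => 4*n) a) ⟨j, x+1⟩) := by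
  constructor
  · intro hmk
    rw [snake_mk_eq_iff hn a ha] at hmk
    rcases hmk with h | ⟨j0, hj0, h1, h2⟩ | ⟨j0, hj0, h1, h2⟩
    · rw [sig_eq_iff] at h
      exact zmod_add_one_ne (by omega) x h.2.symm
    · rw [sig_eq_iff, Fin.mk.injEq] at h1 h2
      omega
    · rw [sig_eq_iff, Fin.mk.injEq] at h1 h2
      omega
  · exact ⟨⟨j, x⟩, ⟨j, x+1⟩, rfl, rfl, j, x, x+1, rfl, rfl, Or.inl rfl⟩


/-- Fix `n ≥ 1` and suppose that for every `s ≥ 1` there exists a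
complete `s,4n`-useful cycle set.  Then for every `k ≥ 1`, every cyclic snake `kC_{4n}`
(with any string, given here by the concrete model `snakeGraph k (fun _ => 4n) a`)
admits a graceful labelling in which the label `0` is assigned to a vertex of the last
cycle lying at any prescribed distance `d ∈ {1, …, 2n}` from the last cut vertex
(the cut vertex of the last cycle being position `0` of cycle `k - 1`, and the vertex at
cycle position `i` lying at distance `min i (4n - i)` from it). -/
theorem stmt_6 (n : ℕ) (hn : 1 ≤ n)
    (H : ∀ s : ℕ, 1 ≤ s → HasCompleteUsefulSet s (4 * n))
    (k : ℕ) (hk : 1 ≤ k) (a : Fin k → ZMod (4 * n))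
    (ha : ∀ j : Fin k, 0 < j.val → j.val + 1 < k → a j ≠ 0)
    (d : ℕ) (hd1 : 1 ≤ d) (hd2 : d ≤ 2 * n)
    (V : Type*) (G : SimpleGraph V)
    (e : G ≃g snakeGraph k (fun _ => 4 * n) a) :
    ∃ (f : V → ℕ) (i : ZMod (4 * n)),
      IsGraceful G (k * (4 * n)) f ∧
      min i.val (4 * n - i.val) = d ∧
      f (e.symm (Quotient.mk (snakeSetoid k (fun _ => 4 * n) a)
        ⟨⟨k - 1, by omega⟩, i⟩)) = 0 := by
  haveI : NeZero (4*n) := ⟨by omega⟩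
  -- the prescribed position of the zero label
  set i : ZMod (4*n) := ((d : ℕ) : ZMod (4*n)) with hidef
  have hival : i.val = d := ZMod.val_natCast_of_lt (by omega)
  have hine : i ≠ 0 := by
    intro h
    rw [← ZMod.val_eq_zero, hival] at h
    omega
  -- the ℕ-indexed attachment positions
  set AN : ℕ → ZMod (4*n) := fun j => if h : j < k then a ⟨j, h⟩ else 0 with hAN
  have hANval : ∀ (j : ℕ) (h : j < k), AN j = a ⟨j, h⟩ := by
    intro j h; simp only [hAN, dif_pos h]
  have hANok : ∀ j, 0 < j → j + 1 < k → AN j ≠ 0 := by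
    intro j h1 h2
    rw [hANval j (by omega)]
    exact ha ⟨j, by omega⟩ h1 h2
  obtain ⟨Gw, ginj, gglue, gbd, geinj, gebd, gesurj, gzero⟩ :=
    snake_core hn H k hk AN hANok i (Or.inr hine)
  -- the labelling on the quotient
  set F0 : (Σ _j : Fin k, ZMod (4*n)) → ℕ := fun q => Gw q.1.val q.2 with hF0
  have hresp : ∀ p q, snakeGlue k (fun _ => 4*n) a p q → F0 p = F0 q := by
    rintro p q ⟨j, hj, rfl, rfl⟩
    show Gw j (a ⟨j, _⟩) = Gw (j+1) 0
    rw [← hANval j (by omega)]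
    exact gglue j hj
  have hrespR : ∀ p q, SnakeR a p q → F0 p = F0 q := by
    intro p q h
    rcases h with h | h | h
    · rw [h]
    · exact hresp _ _ h
    · exact (hresp _ _ h).symm
  set f' : Quotient (snakeSetoid k (fun _ => 4*n) a) → ℕ :=
    Quotient.lift F0 (fun p q hpq => hrespR p q
      ((snake_mk_eq_iff hn a ha p q).mp (Quotient.sound hpq))) with hf'
  set f : V → ℕ := fun v => f' (e v) with hfdef
  -- injectivity of f'
  have hf'inj : Function.Injective f' := by
    intro X Y
    induction X using Quotient.ind with | _ p =>
    induction Y using Quotient.ind with | _ q =>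
    intro hFq
    obtain ⟨⟨j, hj⟩, x⟩ := p
    obtain ⟨⟨j', hj'⟩, y⟩ := q
    have hGL : Gw j x = Gw j' y := hFq
    rw [snake_mk_eq_iff hn a ha]
    rcases ginj j x j' y hj hj' hGL with ⟨h1, h2⟩ | ⟨h1, h2, h3⟩ | ⟨h1, h2, h3⟩
    · left
      rw [sig_eq_iff, Fin.mk.injEq]
      exact ⟨h1, h2⟩
    · right; left
      refine ⟨j, by omega, ?_, ?_⟩
      · rw [sig_eq_iff, Fin.mk.injEq]
        exact ⟨rfl, by rw [h2, hANval j (by omega)]⟩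
      · rw [sig_eq_iff, Fin.mk.injEq]
        exact ⟨by omega, h3⟩
    · right; right
      refine ⟨j', by omega, ?_, ?_⟩
      · rw [sig_eq_iff, Fin.mk.injEq]
        exact ⟨rfl, by rw [h2, hANval j' (by omega)]⟩
      · rw [sig_eq_iff, Fin.mk.injEq]
        exact ⟨by omega, h3⟩
  have heinj : Function.Injective (⇑e) := EmbeddingLike.injective e.toEmbedding
  refine ⟨f, i, ⟨?_, ?_, ?_, ?_⟩, ?_, ?_⟩
  · -- injectivity of f
    intro u v huv
    exact heinj (hf'inj huv)
  · -- bound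
    intro v
    show f' (e v) ≤ k * (4*n)
    induction (e v) using Quotient.ind with | _ p =>
    exact gbd p.1.val p.2 p.1.isLt
  · -- InjOn of edge labels
    intro E1 hE1 E2 hE2 heq
    induction E1 using Sym2.ind with | _ u1 v1 =>
    induction E2 using Sym2.ind with | _ u2 v2 =>
    rw [SimpleGraph.mem_edgeSet] at hE1 hE2
    have hA1 : (snakeGraph k (fun _ => 4*n) a).Adj (e u1) (e v1) := e.map_adj_iff.mpr hE1
    have hA2 : (snakeGraph k (fun _ => 4*n) a).Adj (e u2) (e v2) := e.map_adj_iff.mpr hE2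
    obtain ⟨j1, x1, hc1⟩ := snake_adj_form hA1
    obtain ⟨j2, x2, hc2⟩ := snake_adj_form hA2
    have key1 : edgeLabel f s(u1, v1) = Nat.dist (Gw j1.val x1) (Gw j1.val (x1+1)) := by
      rcases hc1 with ⟨h1, h2⟩ | ⟨h1, h2⟩ <;>
        · show Nat.dist (f' (e u1)) (f' (e v1)) = _
          rw [h1, h2]
          first
          | rfl
          | exact Nat.dist_comm _ _
    have key2 : edgeLabel f s(u2, v2) = Nat.dist (Gw j2.val x2) (Gw j2.val (x2+1)) := by
      rcases hc2 with ⟨h1, h2⟩ | ⟨h1, h2⟩ <;>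
        · show Nat.dist (f' (e u2)) (f' (e v2)) = _
          rw [h1, h2]
          first
          | rfl
          | exact Nat.dist_comm _ _
    rw [key1, key2] at heq
    obtain ⟨hjj, hxx⟩ := geinj j1.val x1 j2.val x2 j1.isLt j2.isLt heq
    have hj12 : j1 = j2 := Fin.ext hjj
    subst hj12
    subst hxx
    -- now both edges are the same snake edge, possibly swapped
    have huv : s(e u1, e v1) = s(e u2, e v2) := by
      rcases hc1 with ⟨h1, h2⟩ | ⟨h1, h2⟩ <;> rcases hc2 with ⟨h3, h4⟩ | ⟨h3, h4⟩ <;>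
        rw [h1, h2, h3, h4] <;> first | rfl | exact Sym2.eq_swap
    rw [Sym2.eq_iff] at huv ⊢
    rcases huv with ⟨ha1, ha2⟩ | ⟨ha1, ha2⟩
    · exact Or.inl ⟨heinj ha1, heinj ha2⟩
    · exact Or.inr ⟨heinj ha1, heinj ha2⟩
  · -- image of edge labels
    ext m
    simp only [Set.mem_image, Set.mem_Icc]
    constructor
    · rintro ⟨E, hE, rfl⟩
      induction E using Sym2.ind with | _ u v =>
      rw [SimpleGraph.mem_edgeSet] at hE
      obtain ⟨j, x, hc⟩ := snake_adj_form (e.map_adj_iff.mpr hE)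
      have key : edgeLabel f s(u, v) = Nat.dist (Gw j.val x) (Gw j.val (x+1)) := by
        rcases hc with ⟨h1, h2⟩ | ⟨h1, h2⟩ <;>
          · show Nat.dist (f' (e u)) (f' (e v)) = _
            rw [h1, h2]
            first
            | rfl
            | exact Nat.dist_comm _ _
      rw [key]
      exact gebd j.val x j.isLt
    · rintro ⟨hm1, hm2⟩
      obtain ⟨j, x, hjk, hx⟩ := gesurj m hm1 hm2
      set X := Quotient.mk (snakeSetoid k (fun _ => 4*n) a) (⟨⟨j, hjk⟩, x⟩ : Σ _j : Fin k, ZMod (4*n)) with hX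
      set Y := Quotient.mk (snakeSetoid k (fun _ => 4*n) a) (⟨⟨j, hjk⟩, x+1⟩ : Σ _j : Fin k, ZMod (4*n)) with hY
      refine ⟨s(e.symm X, e.symm Y), ?_, ?_⟩
      · rw [SimpleGraph.mem_edgeSet, ← e.map_adj_iff]
        rw [RelIso.apply_symm_apply, RelIso.apply_symm_apply]
        exact snake_adj_of hn ha ⟨j, hjk⟩ x
      · show Nat.dist (f' (e (e.symm X))) (f' (e (e.symm Y))) = m
        rw [RelIso.apply_symm_apply, RelIso.apply_symm_apply]
        exact hx
  · -- the distance condition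
    rw [hival]
    omega
  · -- the zero label position
    show f' (e (e.symm _)) = 0
    rw [RelIso.apply_symm_apply]
    exact gzero

end final
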